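/- If discrete random variables Z1, ..., ZK are mutually conditionally independent given (Y, S), then the redundant local information R := (sum over i of I(Y; Zi | S)) − I(Y; Z_{1:K} | S) equals the conditional total correlation TC(Z_{1:K} | S), and in particular R ≥ 0. -/

import Mathlib

open BigOperators

namespace CPT

variable {Ω : Type*} [Fintype Ω]

/-- Probability that the discrete random variable `X` takes value `a`, under pmf `p`. -/
noncomputable def prob {α : Type*} [DecidableEq α] (p : Ω → ℝ) (X : Ω → α) (a : α) : ℝ :=
  ∑ ω : Ω, if X ω = a then p ω else 0

/-- Shannon entropy of a discrete random variable `X` under pmf `p`. -/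
noncomputable def ent {α : Type*} [Fintype α] [DecidableEq α] (p : Ω → ℝ) (X : Ω → α) : ℝ :=
  ∑ a : α, Real.negMulLog (prob p X a)

/-- Conditional entropy `H(X | Y) = H(X, Y) - H(Y)`. -/
noncomputable def condEnt {α β : Type*} [Fintype α] [DecidableEq α] [Fintype β] [DecidableEq β]
    (p : Ω → ℝ) (X : Ω → α) (Y : Ω → β) : ℝ :=
  ent p (fun ω => (X ω, Y ω)) - ent p Y

/-- Conditional mutual information `I(X; Y | Z) = H(X|Z) + H(Y|Z) - H(X,Y|Z)`. -/
noncomputable def condMI {α β γ : Type*} [Fintype α] [DecidableEq α] [Fintype β] [DecidableEq β]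
    [Fintype γ] [DecidableEq γ] (p : Ω → ℝ) (X : Ω → α) (Y : Ω → β) (Z : Ω → γ) : ℝ :=
  condEnt p X Z + condEnt p Y Z - condEnt p (fun ω => (X ω, Y ω)) Z

/-- Conditional total correlation `TC(Z_{1:K} | A) = ∑ᵢ H(Zᵢ|A) - H(Z_{1:K}|A)`. -/
noncomputable def TC {K : ℕ} {α β : Type*} [Fintype α] [DecidableEq α] [Fintype β] [DecidableEq β]
    (p : Ω → ℝ) (Z : Fin K → Ω → α) (A : Ω → β) : ℝ :=
  (∑ i, condEnt p (Z i) A) - condEnt p (fun ω => fun i => Z i ω) A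

/-- `Z₁, …, Z_K` are mutually conditionally independent given `W`. -/
def CondIndepGiven {K : ℕ} {α β : Type*} [DecidableEq α] [DecidableEq β]
    (p : Ω → ℝ) (Z : Fin K → Ω → α) (W : Ω → β) : Prop :=
  ∀ (z : Fin K → α) (w : β),
    prob p (fun ω => ((fun i => Z i ω), W ω)) (z, w) * (prob p W w) ^ (K - 1) =
      ∏ i, prob p (fun ω => (Z i ω, W ω)) (z i, w)

/-!
Since `I(Y; X | S) = H(X | S) - H(X | Y, S)`, the redundancy equals `TC(Z | S) - TC(Z | Y, S)`.
The total correlation of `Z` given `W` is the relative entropy `∑ q log (q / r)` of the joint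
law `q` of `(Z, W)` from `r(z, w) = p(w) ∏ᵢ p(zᵢ | w)`, a measure of the same total mass as `q`.
Hence it is nonnegative by Gibbs' inequality, and it vanishes when the `Zᵢ` are conditionally
independent given `W`, which says exactly that `q = r`.
-/

open Real

section prob

variable {α α' : Type*} [DecidableEq α] [DecidableEq α'] (p : Ω → ℝ)

lemma prob_nonneg (hp : ∀ ω, 0 ≤ p ω) (X : Ω → α) (a : α) : 0 ≤ prob p X a :=
  Finset.sum_nonneg fun ω _ => by split_ifs <;> simp [hp ω]

variable [Fintype α]

lemma sum_prob (X : Ω → α) : ∑ a, prob p X a = ∑ ω, p ω := by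
  unfold prob
  rw [Finset.sum_comm]
  simp

lemma prob_comp (f : α → α') (X : Ω → α) (b : α') :
    prob p (fun ω => f (X ω)) b = ∑ a, if f a = b then prob p X a else 0 := by
  simp only [prob, ← Finset.sum_filter]
  rw [Finset.sum_comm' (t' := Finset.univ.filter fun ω => f (X ω) = b)
    (s' := fun ω => {X ω})]
  · simp
  · aesop

lemma prob_le_prob_comp (hp : ∀ ω, 0 ≤ p ω) (f : α → α') (X : Ω → α) (a : α) :
    prob p X a ≤ prob p (fun ω => f (X ω)) (f a) := by
  rw [prob_comp p f X]
  have := Finset.single_le_sum (f := fun a' => if f a' = f a then prob p X a' else 0)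
    (fun a' _ => by split_ifs <;> simp [prob_nonneg p hp]) (Finset.mem_univ a)
  simpa using this

lemma prob_comp_pos (hp : ∀ ω, 0 ≤ p ω) (f : α → α') {X : Ω → α} {a : α}
    (ha : 0 < prob p X a) : 0 < prob p (fun ω => f (X ω)) (f a) :=
  ha.trans_le (prob_le_prob_comp p hp f X a)

lemma prob_comp_of_injective {f : α → α'} (hf : f.Injective) (X : Ω → α) (a : α) :
    prob p (fun ω => f (X ω)) (f a) = prob p X a := by
  simp [prob_comp, hf.eq_iff]

lemma sum_prob_pair {β : Type*} [Fintype β] [DecidableEq β] (X : Ω → α) (W : Ω → β)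
    (w : β) :
    ∑ a, prob p (fun ω => (X ω, W ω)) (a, w) = prob p W w := by
  rw [show prob p W w = prob p (fun ω => Prod.snd (X ω, W ω)) w from rfl, prob_comp,
    Fintype.sum_prod_type]
  simp

variable [Fintype α']

lemma ent_comp_eq_neg_sum (f : α → α') (X : Ω → α) :
    ent p (fun ω => f (X ω)) = -∑ a, prob p X a * log (prob p (fun ω => f (X ω)) (f a)) := by
  simp only [ent, negMulLog, neg_mul, Finset.sum_neg_distrib, neg_inj]
  calc ∑ b, prob p (fun ω => f (X ω)) b * log (prob p (fun ω => f (X ω)) b)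
      = ∑ b, ∑ a, if f a = b then
          prob p X a * log (prob p (fun ω => f (X ω)) (f a)) else 0 := by
        refine Finset.sum_congr rfl fun b _ => ?_
        nth_rw 1 [prob_comp p f X b]
        rw [Finset.sum_mul]
        exact Finset.sum_congr rfl fun a _ => by split_ifs with h <;> simp [h]
    _ = _ := by
        rw [Finset.sum_comm]
        simp

lemma ent_eq_neg_sum (X : Ω → α) : ent p X = -∑ a, prob p X a * log (prob p X a) :=
  ent_comp_eq_neg_sum p id X

lemma ent_comp_equiv (e : α ≃ α') (X : Ω → α) : ent p (fun ω => e (X ω)) = ent p X := by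
  rw [ent_comp_eq_neg_sum, ent_eq_neg_sum]
  simp only [prob_comp_of_injective p e.injective]

end prob

lemma sub_le_mul_log_sub_log {x y : ℝ} (hx : 0 ≤ x) (hy : 0 ≤ y) (hxy : 0 < x → 0 < y) :
    x - y ≤ x * (log x - log y) := by
  rcases hx.eq_or_lt with rfl | hx
  · simpa using hy
  have hy := hxy hx
  have key := one_sub_inv_le_log_of_pos (div_pos hx hy)
  rw [log_div hx.ne' hy.ne', inv_div] at key
  calc x - y = x * (1 - y / x) := by field_simp
    _ ≤ x * (log x - log y) := by gcongr

section TC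

variable {K : ℕ} {α γ : Type*} [DecidableEq α] [DecidableEq γ] (p : Ω → ℝ)
  (hp : ∀ ω, 0 ≤ p ω) (Z : Fin K → Ω → α) (W : Ω → γ)

/-- `p(w) ∏ᵢ p(zᵢ | w)`: the law under which the `Zᵢ` are conditionally independent given `W`,
with the same laws of the pairs `(Zᵢ, W)`. -/
noncomputable def condProductProb (t : (Fin K → α) × γ) : ℝ :=
  prob p W t.2 * ∏ i, prob p (fun ω => (Z i ω, W ω)) (t.1 i, t.2) / prob p W t.2

include hp in
lemma condProductProb_nonneg (t : (Fin K → α) × γ) : 0 ≤ condProductProb p Z W t :=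
  mul_nonneg (prob_nonneg p hp W t.2) <| Finset.prod_nonneg fun _ _ =>
    div_nonneg (prob_nonneg p hp _ _) (prob_nonneg p hp W t.2)

variable [Fintype α] [Fintype γ]

lemma sum_condProductProb :
    ∑ t, condProductProb p Z W t = ∑ ω, p ω := by
  rw [← sum_prob p W, Fintype.sum_prod_type_right]
  refine Finset.sum_congr rfl fun w _ => ?_
  simp only [condProductProb]
  rw [← Finset.mul_sum, ← Fintype.prod_sum
    (f := fun i a => prob p (fun ω => (Z i ω, W ω)) (a, w) / prob p W w)]
  simp only [← Finset.sum_div, sum_prob_pair]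
  rcases eq_or_ne (prob p W w) 0 with h | h <;> simp [h]

include hp

lemma condProductProb_pos {t : (Fin K → α) × γ}
    (ht : 0 < prob p (fun ω => ((fun i => Z i ω), W ω)) t) : 0 < condProductProb p Z W t :=
  mul_pos (prob_comp_pos p hp Prod.snd ht) <| Finset.prod_pos fun i _ =>
    div_pos (prob_comp_pos p hp (fun t : (Fin K → α) × γ => (t.1 i, t.2)) ht)
      (prob_comp_pos p hp Prod.snd ht)

lemma log_condProductProb {t : (Fin K → α) × γ}
    (ht : 0 < prob p (fun ω => ((fun i => Z i ω), W ω)) t) :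
    log (condProductProb p Z W t) = log (prob p W t.2) +
      ∑ i, (log (prob p (fun ω => (Z i ω, W ω)) (t.1 i, t.2)) - log (prob p W t.2)) := by
  have hW : 0 < prob p W t.2 := prob_comp_pos p hp Prod.snd ht
  have hZ i : 0 < prob p (fun ω => (Z i ω, W ω)) (t.1 i, t.2) :=
    prob_comp_pos p hp (fun t : (Fin K → α) × γ => (t.1 i, t.2)) ht
  rw [condProductProb, log_mul hW.ne' (Finset.prod_ne_zero_iff.2 fun i _ => by
    have := hZ i; positivity), log_prod fun i _ => by have := hZ i; positivity]
  simp_rw [log_div (hZ _).ne' hW.ne']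

lemma TC_eq_sum_mul_log_sub_log :
    TC p Z W = ∑ t, prob p (fun ω => ((fun i => Z i ω), W ω)) t *
      (log (prob p (fun ω => ((fun i => Z i ω), W ω)) t) -
        log (condProductProb p Z W t)) := by
  set T := fun ω => ((fun i => Z i ω), W ω)
  set q := prob p T
  have hW : ent p W = -∑ t, q t * log (prob p W t.2) := ent_comp_eq_neg_sum p Prod.snd T
  have hZ i : ent p (fun ω => (Z i ω, W ω)) =
      -∑ t, q t * log (prob p (fun ω => (Z i ω, W ω)) (t.1 i, t.2)) :=
    ent_comp_eq_neg_sum p (fun t : (Fin K → α) × γ => (t.1 i, t.2)) T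
  have hT : ent p (fun ω => ((fun i => Z i ω), W ω)) = -∑ t, q t * log (q t) :=
    ent_eq_neg_sum p T
  have hlog t : q t * log (condProductProb p Z W t) = q t * (log (prob p W t.2) +
      ∑ i, (log (prob p (fun ω => (Z i ω, W ω)) (t.1 i, t.2)) - log (prob p W t.2))) := by
    rcases (prob_nonneg p hp T t).eq_or_lt with ht | ht
    · simp [q, ← ht]
    · rw [log_condProductProb p hp Z W ht]
  have hcomm := Finset.sum_comm (s := Finset.univ) (t := Finset.univ) (f := fun i t =>
    q t * (log (prob p (fun ω => (Z i ω, W ω)) (t.1 i, t.2)) - log (prob p W t.2)))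
  simp only [TC, condEnt, hW, hZ, hT, mul_sub, hlog, mul_add, Finset.mul_sum,
    Finset.sum_sub_distrib, Finset.sum_add_distrib, Finset.sum_neg_distrib] at hcomm ⊢
  linarith

theorem TC_nonneg : 0 ≤ TC p Z W := by
  rw [TC_eq_sum_mul_log_sub_log p hp]
  calc (0 : ℝ) = ∑ t, prob p (fun ω => ((fun i => Z i ω), W ω)) t -
        ∑ t, condProductProb p Z W t := by
        rw [sum_prob, sum_condProductProb, sub_self]
    _ = ∑ t, (prob p (fun ω => ((fun i => Z i ω), W ω)) t - condProductProb p Z W t) :=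
        (Finset.sum_sub_distrib _ _).symm
    _ ≤ _ := Finset.sum_le_sum fun t _ => sub_le_mul_log_sub_log (prob_nonneg p hp _ t)
        (condProductProb_nonneg p hp Z W t) (condProductProb_pos p hp Z W)

lemma condProductProb_eq_of_condIndep (h : CondIndepGiven p Z W) {t : (Fin K → α) × γ}
    (ht : 0 < prob p (fun ω => ((fun i => Z i ω), W ω)) t) :
    condProductProb p Z W t = prob p (fun ω => ((fun i => Z i ω), W ω)) t := by
  have hW : prob p W t.2 ≠ 0 := (prob_comp_pos p hp Prod.snd ht).ne'
  rcases K with _ | k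
  -- `K - 1` truncates at `K = 0`, where both sides are simply the law of `W`.
  · have hT : (fun ω => ((fun i => Z i ω), W ω)) = fun ω => (t.1, W ω) :=
      funext fun ω => Prod.ext (Subsingleton.elim _ _) rfl
    rw [condProductProb, Finset.univ_eq_empty, Finset.prod_empty, mul_one, hT,
      prob_comp_of_injective p (Prod.mk_right_injective t.1)]
  · rw [condProductProb, Finset.prod_div_distrib, ← h t.1 t.2, Finset.prod_const,
      Finset.card_univ, Fintype.card_fin, Nat.add_sub_cancel, pow_succ]
    field_simp

theorem TC_eq_zero_of_condIndep (h : CondIndepGiven p Z W) : TC p Z W = 0 := by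
  rw [TC_eq_sum_mul_log_sub_log p hp]
  refine Finset.sum_eq_zero fun t _ => ?_
  rcases (prob_nonneg p hp (fun ω => ((fun i => Z i ω), W ω)) t).eq_or_lt with ht | ht
  · simp [← ht]
  · rw [condProductProb_eq_of_condIndep p hp Z W h ht, sub_self, mul_zero]

end TC

lemma condMI_eq_condEnt_sub_condEnt {α β γ : Type*} [Fintype α] [DecidableEq α] [Fintype β]
    [DecidableEq β] [Fintype γ] [DecidableEq γ] (p : Ω → ℝ) (X : Ω → α) (Y : Ω → β)
    (S : Ω → γ) : condMI p X Y S = condEnt p Y S - condEnt p Y (fun ω => (X ω, S ω)) := by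
  have h : ent p (fun ω => (Y ω, (X ω, S ω))) = ent p (fun ω => ((X ω, Y ω), S ω)) :=
    ent_comp_equiv p (((Equiv.prodComm α β).prodCongr (Equiv.refl γ)).trans
      (Equiv.prodAssoc β α γ)) (fun ω => ((X ω, Y ω), S ω))
  unfold condMI condEnt
  rw [h]
  ring

theorem redundancy_eq_tc_of_condIndep_general
    {Ω : Type*} [Fintype Ω] {K : ℕ} {α β γ : Type*}
    [Fintype α] [DecidableEq α] [Fintype β] [DecidableEq β] [Fintype γ] [DecidableEq γ]
    (p : Ω → ℝ) (hp : ∀ ω, 0 ≤ p ω)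
    (Y : Ω → β) (Z : Fin K → Ω → α) (S : Ω → γ)
    (hindep : CondIndepGiven p Z (fun ω => (Y ω, S ω))) :
    (∑ i, condMI p Y (Z i) S) - condMI p Y (fun ω => fun i => Z i ω) S = TC p Z S ∧
      0 ≤ (∑ i, condMI p Y (Z i) S) - condMI p Y (fun ω => fun i => Z i ω) S := by
  have hR : (∑ i, condMI p Y (Z i) S) - condMI p Y (fun ω => fun i => Z i ω) S =
      TC p Z S - TC p Z (fun ω => (Y ω, S ω)) := by
    simp only [condMI_eq_condEnt_sub_condEnt, TC, Finset.sum_sub_distrib]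
    ring
  rw [TC_eq_zero_of_condIndep p hp Z _ hindep, sub_zero] at hR
  exact ⟨hR, hR ▸ TC_nonneg p hp Z S⟩

theorem redundancy_eq_tc_of_condIndep
    {Ω : Type*} [Fintype Ω] {K : ℕ} {α β γ : Type*}
    [Fintype α] [DecidableEq α] [Fintype β] [DecidableEq β] [Fintype γ] [DecidableEq γ]
    (p : Ω → ℝ) (hp : ∀ ω, 0 ≤ p ω) (hp1 : ∑ ω, p ω = 1)
    (Y : Ω → β) (Z : Fin K → Ω → α) (S : Ω → γ)
    (hindep : CondIndepGiven p Z (fun ω => (Y ω, S ω))) :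
    (∑ i, condMI p Y (Z i) S) - condMI p Y (fun ω => fun i => Z i ω) S = TC p Z S ∧
      0 ≤ (∑ i, condMI p Y (Z i) S) - condMI p Y (fun ω => fun i => Z i ω) S :=
  redundancy_eq_tc_of_condIndep_general p hp Y Z S hindep
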